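/- Uniform-flow (Thomson) upper bound on the effective resistance: if E[ν^2] < ∞ (so that the martingale limit W is strictly positive almost surely), then almost surely, for every n ≥ 1, R_n ≤ Σ_{k=1}^{n} Σ_{x ∈ T_k} m^{-k} ξ_x (W^{(x)}/W)^2. -/

import Mathlib

/-!
Thomson's principle bounds the effective resistance by the energy of any unit flow. The flow
used here sends the fraction `m⁻ᵏ W⁽ˣ⁾ / W` of the current through each vertex `x` of generation
`k`; it is a unit flow because `W⁽ˣ⁾ = m⁻¹ ∑ᵢ W⁽ˣⁱ⁾` almost surely. Instead of setting up flows on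
networks, the energy bound is proved by induction along the series–parallel recursion for `C_n`,
using the Cauchy–Schwarz inequality (in Sedrakyan's form) at each branch point.

The only probabilistic input is `W > 0` a.s. Since `E[ν²] < ∞`, the rescaled generation sizes
are bounded in `L²`, so by a Paley–Zygmund argument each `W⁽ˣ⁾` vanishes with probability at
most `1 - δ` for a fixed `δ > 0`. Independence of disjoint subtrees then gives
`P(W⁽ˣ⁾ = 0) ≤ r · P(W⁽ˣ⁰⁾ = 0)` with `r = P(ν = 1) + P(ν ≥ 2) (1 - δ) < 1`, and comparing the
suprema over `x` forces `P(W = 0) = 0`.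
-/

open MeasureTheory ProbabilityTheory Filter Topology Asymptotics
open scoped ENNReal

noncomputable section

/-- The root of the Galton--Watson tree, seen as the empty word. -/
def root : List ℕ := []

/-- `tcount ν n x ω` is the number of descendants at relative depth `n` of the vertex `x`
in the Galton--Watson tree built from the offspring variables `ν`; thus `#T_n[x] = tcount ν
(n - |x|) x` and `#T_n = tcount ν n root`. -/
def tcount {Ω : Type*} (ν : List ℕ → Ω → ℕ) : ℕ → List ℕ → Ω → ℕ
  | 0, _, _ => 1
  | n + 1, x, ω => ∑ i ∈ Finset.range (ν x ω), tcount ν n (x ++ [i]) ω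

/-- `verts ν n ω` is the set `T_n` of vertices (words) at depth `n` of the Galton--Watson
tree. -/
def verts {Ω : Type*} (ν : List ℕ → Ω → ℕ) : ℕ → Ω → Finset (List ℕ)
  | 0, _ => {root}
  | n + 1, ω => (verts ν n ω).biUnion fun x => (Finset.range (ν x ω)).image fun i => x ++ [i]

/-- `gwCond m ν ξ n x ω` is the rescaled effective conductance between the vertex `x` and its
descendants at relative depth `n`, defined through the series--parallel recursion
`C_1(x) = m⁻¹ ∑_{i<ν_x} ξ_{xi}⁻¹` and
`C_{n+1}(x) = m⁻¹ ∑_{i<ν_x} C_n(xi) / (1 + ξ_{xi} C_n(xi))`.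
In particular `C_n = gwCond m ν ξ n root` and `R_n = (gwCond m ν ξ n root)⁻¹`. -/
def gwCond {Ω : Type*} (m : ℝ) (ν : List ℕ → Ω → ℕ) (ξ : List ℕ → Ω → ℝ) :
    ℕ → List ℕ → Ω → ℝ
  | 0, _, _ => 0
  | 1, x, ω => m⁻¹ * ∑ i ∈ Finset.range (ν x ω), (ξ (x ++ [i]) ω)⁻¹
  | n + 2, x, ω => m⁻¹ * ∑ i ∈ Finset.range (ν x ω),
      gwCond m ν ξ (n + 1) (x ++ [i]) ω /
        (1 + ξ (x ++ [i]) ω * gwCond m ν ξ (n + 1) (x ++ [i]) ω)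

/-- Codomain of the joint family gathering the offspring variables `ν_x` (indexed by
`Sum.inl x`) and the edge weights `ξ_x` (indexed by `Sum.inr x`). -/
def codom : List ℕ ⊕ List ℕ → Type
  | .inl _ => ℕ
  | .inr _ => ℝ

instance : ∀ i, MeasurableSpace (codom i)
  | .inl _ => inferInstanceAs (MeasurableSpace ℕ)
  | .inr _ => inferInstanceAs (MeasurableSpace ℝ)

/-- The joint family of the offspring variables and the edge weights, used to state that all
these random variables are globally independent. -/
def pairFam {Ω : Type*} (ν : List ℕ → Ω → ℕ) (ξ : List ℕ → Ω → ℝ) :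
    (i : List ℕ ⊕ List ℕ) → Ω → codom i
  | .inl x => ν x
  | .inr x => ξ x

section Tree

variable {Ω : Type*} {ν : List ℕ → Ω → ℕ} {ω : Ω}

-- `T_{|x|+n}[x]` in the paper's notation.
def vertsFrom (ν : List ℕ → Ω → ℕ) (x : List ℕ) : ℕ → Ω → Finset (List ℕ)
  | 0, _ => {x}
  | n + 1, ω =>
    (vertsFrom ν x n ω).biUnion fun y => (Finset.range (ν y ω)).image fun i => y ++ [i]

@[simp]
lemma vertsFrom_zero (x : List ℕ) (ω : Ω) : vertsFrom ν x 0 ω = {x} := rfl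

lemma verts_eq_vertsFrom_root (n : ℕ) (ω : Ω) : verts ν n ω = vertsFrom ν root n ω := by
  induction n with
  | zero => rfl
  | succ n ih => simp only [verts, vertsFrom, ih]

lemma vertsFrom_succ (x : List ℕ) (n : ℕ) (ω : Ω) :
    vertsFrom ν x (n + 1) ω =
      (Finset.range (ν x ω)).biUnion fun i => vertsFrom ν (x ++ [i]) n ω := by
  induction n generalizing x with
  | zero => ext; simp [vertsFrom, eq_comm]
  | succ n ih => rw [vertsFrom, ih, Finset.biUnion_biUnion]; rfl

lemma prefix_of_mem_vertsFrom {x z : List ℕ} {n : ℕ} (h : z ∈ vertsFrom ν x n ω) :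
    x <+: z := by
  induction n generalizing z with
  | zero => simp_all [vertsFrom]
  | succ n ih =>
    simp only [vertsFrom, Finset.mem_biUnion, Finset.mem_image] at h
    obtain ⟨y, hy, i, -, rfl⟩ := h
    exact (ih hy).trans (List.prefix_append y [i])

lemma List.eq_of_append_singleton_prefix {α : Type*} {x z : List α} {a b : α}
    (ha : x ++ [a] <+: z) (hb : x ++ [b] <+: z) : a = b := by
  have := (List.prefix_of_prefix_length_le ha hb (by simp)).eq_of_length (by simp)
  simpa using this

lemma sum_vertsFrom_succ {M : Type*} [AddCommMonoid M] (x : List ℕ) (n : ℕ) (ω : Ω)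
    (f : List ℕ → M) :
    ∑ z ∈ vertsFrom ν x (n + 1) ω, f z =
      ∑ i ∈ Finset.range (ν x ω), ∑ z ∈ vertsFrom ν (x ++ [i]) n ω, f z := by
  rw [vertsFrom_succ]
  refine Finset.sum_biUnion fun i _ j _ hij => Finset.disjoint_left.2 fun z hzi hzj => hij ?_
  exact List.eq_of_append_singleton_prefix (prefix_of_mem_vertsFrom hzi)
    (prefix_of_mem_vertsFrom hzj)

end Tree

section Thomson

variable {Ω : Type*} {m : ℝ} {ν : List ℕ → Ω → ℕ} {ξ : List ℕ → Ω → ℝ} {ω : Ω}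

lemma gwCond_succ_pos (hm : 0 < m) (hν : ∀ y, 0 < ν y ω) (hξ : ∀ y, 0 < ξ y ω) (n : ℕ)
    (y : List ℕ) : 0 < gwCond m ν ξ (n + 1) y ω := by
  induction n generalizing y with
  | zero =>
    exact mul_pos (inv_pos.2 hm) (Finset.sum_pos (fun i _ => inv_pos.2 (hξ _))
      ⟨0, Finset.mem_range.2 (hν y)⟩)
  | succ n ih =>
    refine mul_pos (inv_pos.2 hm)
      (Finset.sum_pos (fun i _ => ?_) ⟨0, Finset.mem_range.2 (hν y)⟩)
    have := ih (y ++ [i])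
    have := hξ (y ++ [i])
    positivity

lemma gwCond_nonneg (hm : 0 < m) (hν : ∀ y, 0 < ν y ω) (hξ : ∀ y, 0 < ξ y ω) (n : ℕ)
    (y : List ℕ) : 0 ≤ gwCond m ν ξ n y ω := by
  cases n with
  | zero => exact le_rfl
  | succ n => exact (gwCond_succ_pos hm hν hξ n y).le

-- This also holds for `n = 0`, where `gwCond 0 = 0` and `0⁻¹ = 0`.
lemma gwCond_succ (hm : 0 < m) (hν : ∀ y, 0 < ν y ω) (hξ : ∀ y, 0 < ξ y ω) (n : ℕ)
    (y : List ℕ) :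
    gwCond m ν ξ (n + 1) y ω = ∑ i ∈ Finset.range (ν y ω),
      (m * (ξ (y ++ [i]) ω + (gwCond m ν ξ n (y ++ [i]) ω)⁻¹))⁻¹ := by
  cases n with
  | zero => simp [gwCond, Finset.mul_sum, mul_comm]
  | succ n =>
    rw [gwCond, Finset.mul_sum]
    refine Finset.sum_congr rfl fun i _ => ?_
    have := gwCond_succ_pos hm hν hξ n (y ++ [i])
    have := hξ (y ++ [i])
    field_simp
    exact add_comm _ _

-- The energy `∑ r(z) θ(z)²` of the flow `θ(z) = m⁻ᵏ W z` through the resistances `r(z) = mᵏ ξ_z`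
-- on the first `n` generations below `y`, where `k` is the depth of `z` relative to `y`.
def flowEnergy (m : ℝ) (ν : List ℕ → Ω → ℕ) (ξ : List ℕ → Ω → ℝ) (W : List ℕ → ℝ)
    (n : ℕ) (y : List ℕ) (ω : Ω) : ℝ :=
  ∑ k ∈ Finset.range n, ∑ z ∈ vertsFrom ν y (k + 1) ω, (m ^ (k + 1))⁻¹ * ξ z ω * W z ^ 2

lemma flowEnergy_succ (W : List ℕ → ℝ) (n : ℕ) (y : List ℕ) :
    flowEnergy m ν ξ W (n + 1) y ω = m⁻¹ * ∑ i ∈ Finset.range (ν y ω),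
      (ξ (y ++ [i]) ω * W (y ++ [i]) ^ 2 + flowEnergy m ν ξ W n (y ++ [i]) ω) := by
  rw [flowEnergy, Finset.sum_range_succ']
  simp only [sum_vertsFrom_succ (M := ℝ) y, vertsFrom_zero, Finset.sum_singleton]
  rw [Finset.sum_comm, ← Finset.sum_add_distrib, Finset.mul_sum]
  refine Finset.sum_congr rfl fun i _ => ?_
  simp only [flowEnergy, mul_add, Finset.mul_sum, pow_succ]
  rw [add_comm]
  congr 1
  · ring
  · exact Finset.sum_congr rfl fun _ _ => Finset.sum_congr rfl fun _ _ => by ring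

theorem sq_mul_inv_gwCond_le_flowEnergy (hm : 0 < m) (hν : ∀ y, 0 < ν y ω)
    (hξ : ∀ y, 0 < ξ y ω) {W : List ℕ → ℝ}
    (hW : ∀ y, ∑ i ∈ Finset.range (ν y ω), W (y ++ [i]) = m * W y) (n : ℕ) (y : List ℕ) :
    W y ^ 2 * (gwCond m ν ξ n y ω)⁻¹ ≤ flowEnergy m ν ξ W n y ω := by
  induction n generalizing y with
  | zero => simp [gwCond, flowEnergy]
  | succ n ih =>
    set s : ℕ → ℝ := fun i => m * (ξ (y ++ [i]) ω + (gwCond m ν ξ n (y ++ [i]) ω)⁻¹)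
    have hs : ∀ i, 0 < s i := fun i => by
      have := hξ (y ++ [i])
      have := gwCond_nonneg hm hν hξ n (y ++ [i])
      positivity
    have titu := Finset.sq_sum_div_le_sum_sq_div (Finset.range (ν y ω))
      (fun i => W (y ++ [i])) (g := fun i => (s i)⁻¹) fun i _ => inv_pos.2 (hs i)
    rw [hW, ← gwCond_succ hm hν hξ] at titu
    simp only [div_inv_eq_mul] at titu
    calc W y ^ 2 * (gwCond m ν ξ (n + 1) y ω)⁻¹
        = m⁻¹ * (m⁻¹ * ((m * W y) ^ 2 / gwCond m ν ξ (n + 1) y ω)) := by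
          field_simp
      _ ≤ m⁻¹ * (m⁻¹ * ∑ i ∈ Finset.range (ν y ω), W (y ++ [i]) ^ 2 * s i) := by gcongr
      _ = m⁻¹ * ∑ i ∈ Finset.range (ν y ω), (ξ (y ++ [i]) ω * W (y ++ [i]) ^ 2 +
            W (y ++ [i]) ^ 2 * (gwCond m ν ξ n (y ++ [i]) ω)⁻¹) := by
          rw [Finset.mul_sum]
          congr 1
          refine Finset.sum_congr rfl fun i _ => ?_
          simp only [s]
          field_simp
      _ ≤ flowEnergy m ν ξ W (n + 1) y ω := by
          rw [flowEnergy_succ]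
          gcongr with i
          exact ih _

lemma flowEnergy_root_eq (W : List ℕ → ℝ) (n : ℕ) (ω : Ω) :
    flowEnergy m ν ξ W n root ω =
      ∑ k ∈ Finset.Icc 1 n, ∑ x ∈ verts ν k ω, (m ^ k)⁻¹ * ξ x ω * W x ^ 2 := by
  rw [← Finset.Ico_add_one_right_eq_Icc, Finset.sum_Ico_eq_sum_range, Nat.add_sub_cancel,
    flowEnergy]
  simp only [verts_eq_vertsFrom_root, add_comm 1]

end Thomson

section Offspring

variable {Ω : Type*} {ν : List ℕ → Ω → ℕ} {S T : Set (List ℕ)}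

abbrev offspringSigma (ν : List ℕ → Ω → ℕ) (S : Set (List ℕ)) : MeasurableSpace Ω :=
  ⨆ y ∈ S, MeasurableSpace.comap (ν y) inferInstance

def subtree (x : List ℕ) : Set (List ℕ) := {y | x <+: y}

def hasChild (ν : List ℕ → Ω → ℕ) (x : List ℕ) (i : ℕ) : Set Ω := {ω | i < ν x ω}

lemma measurable_offspringSigma {y : List ℕ} (hy : y ∈ S) :
    Measurable[offspringSigma ν S] (ν y) :=
  Measurable.of_comap_le <|
    le_iSup₂ (f := fun y (_ : y ∈ S) => MeasurableSpace.comap (ν y) inferInstance) y hy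

lemma offspringSigma_mono (h : S ⊆ T) : offspringSigma ν S ≤ offspringSigma ν T :=
  biSup_mono h

lemma offspringSigma_le [MeasurableSpace Ω] (hν : ∀ x, Measurable (ν x)) (S : Set (List ℕ)) :
    offspringSigma ν S ≤ ‹MeasurableSpace Ω› :=
  iSup₂_le fun y _ => (hν y).comap_le

lemma measurableSet_hasChild {x : List ℕ} (hx : x ∈ S) (i : ℕ) :
    MeasurableSet[offspringSigma ν S] (hasChild ν x i) :=
  measurable_offspringSigma hx measurableSet_Ioi

lemma measurable_indicator_hasChild {x : List ℕ} (hx : x ∈ S) (i : ℕ) :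
    Measurable[offspringSigma ν S] ((hasChild ν x i).indicator (1 : Ω → ℝ≥0∞)) :=
  measurable_const.indicator (measurableSet_hasChild hx i)

lemma subtree_append_subset (x : List ℕ) (i : ℕ) : subtree (x ++ [i]) ⊆ subtree x :=
  fun _ hy => (List.prefix_append x [i]).trans hy

lemma disjoint_singleton_subtree (x : List ℕ) (i : ℕ) :
    Disjoint {x} (subtree (x ++ [i])) := by
  simpa [subtree] using fun h : x ++ [i] <+: x => by simpa using h.length_le

lemma disjoint_subtree_append {x : List ℕ} {i j : ℕ} (hij : i ≠ j) :
    Disjoint (subtree (x ++ [i])) (subtree (x ++ [j])) :=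
  Set.disjoint_left.2 fun _ hi hj => hij (List.eq_of_append_singleton_prefix hi hj)

lemma tcount_one (x : List ℕ) (ω : Ω) : tcount ν 1 x ω = ν x ω := by
  simp [tcount]

def branchCount (ν : List ℕ → Ω → ℕ) (n : ℕ) (x : List ℕ) (i : ℕ) (ω : Ω) : ℝ≥0∞ :=
  (hasChild ν x i).indicator 1 ω * tcount ν n (x ++ [i]) ω

lemma natCast_tcount_succ (n : ℕ) (x : List ℕ) (ω : Ω) :
    (tcount ν (n + 1) x ω : ℝ≥0∞) = ∑' i, branchCount ν n x i ω := by
  rw [tsum_eq_sum (s := Finset.range (ν x ω)) fun i hi => by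
    simp [branchCount, hasChild, show ¬ i < ν x ω by simpa using hi]]
  simp only [tcount, Nat.cast_sum]
  refine Finset.sum_congr rfl fun i hi => ?_
  rw [branchCount, Set.indicator_of_mem (show ω ∈ hasChild ν x i from Finset.mem_range.1 hi),
    Pi.one_apply, one_mul]

lemma measurable_tcount (n : ℕ) (x : List ℕ) :
    Measurable[offspringSigma ν (subtree x)] fun ω => (tcount ν n x ω : ℝ≥0∞) := by
  induction n generalizing x with
  | zero => simp [tcount]
  | succ n ih =>
    simp_rw [natCast_tcount_succ]
    let := offspringSigma ν (subtree x)
    exact Measurable.tsum fun i =>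
      (measurable_indicator_hasChild (List.prefix_refl x) i).mul
        ((ih _).mono (offspringSigma_mono (subtree_append_subset x i)) le_rfl)

lemma natCast_sq_tcount_succ (n : ℕ) (x : List ℕ) (ω : Ω) :
    (tcount ν (n + 1) x ω : ℝ≥0∞) ^ 2 =
      ∑' i, ∑' j, branchCount ν n x i ω * branchCount ν n x j ω := by
  rw [sq, natCast_tcount_succ, ← ENNReal.tsum_mul_right]
  exact tsum_congr fun i => ENNReal.tsum_mul_left.symm

end Offspring

section Moments

variable {Ω : Type*} [MeasurableSpace Ω] {P : Measure Ω} {ν : List ℕ → Ω → ℕ}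
  {S T : Set (List ℕ)}

lemma iIndepFun_of_pairFam {ξ : List ℕ → Ω → ℝ} (h : iIndepFun (pairFam ν ξ) P) :
    iIndepFun ν P :=
  h.precomp (g := Sum.inl) Sum.inl_injective

lemma ProbabilityTheory.IdentDistrib.lintegral_comp_eq {α Ω' : Type*} [MeasurableSpace α]
    [MeasurableSpace Ω'] {P' : Measure Ω'} {f : Ω → α} {g : Ω' → α} (h : IdentDistrib f g P P')
    {φ : α → ℝ≥0∞} (hφ : Measurable φ) : ∫⁻ ω, φ (f ω) ∂P = ∫⁻ ω, φ (g ω) ∂P' :=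
  (h.comp hφ).lintegral_eq

lemma indep_offspringSigma (hmν : ∀ x, Measurable (ν x)) (hind : iIndepFun ν P)
    (hST : Disjoint S T) : Indep (offspringSigma ν S) (offspringSigma ν T) P :=
  indep_iSup_of_disjoint (fun x => (hmν x).comap_le) hind.iIndep hST

lemma lintegral_mul_eq_of_disjoint (hmν : ∀ x, Measurable (ν x)) (hind : iIndepFun ν P)
    (hST : Disjoint S T) {f g : Ω → ℝ≥0∞} (hf : Measurable[offspringSigma ν S] f)
    (hg : Measurable[offspringSigma ν T] g) :
    ∫⁻ ω, f ω * g ω ∂P = (∫⁻ ω, f ω ∂P) * ∫⁻ ω, g ω ∂P :=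
  lintegral_mul_eq_lintegral_mul_lintegral_of_independent_measurableSpace
    (offspringSigma_le hmν S) (offspringSigma_le hmν T) (indep_offspringSigma hmν hind hST) hf hg

lemma measure_inter_eq_mul_of_disjoint (hmν : ∀ x, Measurable (ν x)) (hind : iIndepFun ν P)
    (hST : Disjoint S T) {A B : Set Ω}
    (hA : MeasurableSet[offspringSigma ν S] A) (hB : MeasurableSet[offspringSigma ν T] B) :
    P (A ∩ B) = P A * P B :=
  (Indep_iff _ _ _).1 (indep_offspringSigma hmν hind hST) A B hA hB

lemma measurable_branchCount (hmν : ∀ x, Measurable (ν x)) (n : ℕ) (x : List ℕ) (i : ℕ) :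
    Measurable (branchCount ν n x i) :=
  ((measurable_indicator_hasChild (Set.mem_singleton x) i).mono (offspringSigma_le hmν _)
    le_rfl).mul ((measurable_tcount n _).mono (offspringSigma_le hmν _) le_rfl)

lemma lintegral_tcount_succ (hmν : ∀ x, Measurable (ν x)) (hind : iIndepFun ν P) (n : ℕ)
    (x : List ℕ) :
    ∫⁻ ω, (tcount ν (n + 1) x ω : ℝ≥0∞) ∂P =
      ∑' i, P (hasChild ν x i) * ∫⁻ ω, (tcount ν n (x ++ [i]) ω : ℝ≥0∞) ∂P := by
  simp_rw [natCast_tcount_succ]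
  rw [lintegral_tsum fun i => (measurable_branchCount hmν n x i).aemeasurable]
  refine tsum_congr fun i => ?_
  simp only [branchCount]
  rw [lintegral_mul_eq_of_disjoint hmν hind (disjoint_singleton_subtree x i)
    (measurable_indicator_hasChild (Set.mem_singleton x) i) (measurable_tcount n _),
    lintegral_indicator_one (offspringSigma_le hmν _ _ (measurableSet_hasChild rfl i))]

lemma lintegral_branchCount_mul_of_ne (hmν : ∀ x, Measurable (ν x)) (hind : iIndepFun ν P)
    {n : ℕ} {x : List ℕ} {i j : ℕ} (hij : i ≠ j) :
    ∫⁻ ω, branchCount ν n x i ω * branchCount ν n x j ω ∂P =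
      (∫⁻ ω, (hasChild ν x i).indicator 1 ω * (hasChild ν x j).indicator 1 ω ∂P) *
        ((∫⁻ ω, (tcount ν n (x ++ [i]) ω : ℝ≥0∞) ∂P) *
          ∫⁻ ω, (tcount ν n (x ++ [j]) ω : ℝ≥0∞) ∂P) := by
  have hsplit : ∀ ω, branchCount ν n x i ω * branchCount ν n x j ω =
      (hasChild ν x i).indicator 1 ω * (hasChild ν x j).indicator 1 ω *
        ((tcount ν n (x ++ [i]) ω : ℝ≥0∞) * tcount ν n (x ++ [j]) ω) := fun ω => by
    simp only [branchCount]; ring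
  have hx := Set.mem_singleton x
  have hind_ij : Measurable[offspringSigma ν {x}] fun ω =>
      (hasChild ν x i).indicator (1 : Ω → ℝ≥0∞) ω * (hasChild ν x j).indicator 1 ω :=
    (measurable_indicator_hasChild hx i).mul (measurable_indicator_hasChild hx j)
  have htcount_ij : Measurable[offspringSigma ν (subtree (x ++ [i]) ∪ subtree (x ++ [j]))]
      fun ω => (tcount ν n (x ++ [i]) ω : ℝ≥0∞) * tcount ν n (x ++ [j]) ω :=
    ((measurable_tcount n _).mono (offspringSigma_mono Set.subset_union_left) le_rfl).mul
      ((measurable_tcount n _).mono (offspringSigma_mono Set.subset_union_right) le_rfl)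
  simp_rw [hsplit]
  rw [lintegral_mul_eq_of_disjoint hmν hind
      ((disjoint_singleton_subtree x i).union_right (disjoint_singleton_subtree x j)) hind_ij
      htcount_ij,
    lintegral_mul_eq_of_disjoint hmν hind (disjoint_subtree_append hij) (measurable_tcount n _)
      (measurable_tcount n _)]

lemma lintegral_branchCount_sq (hmν : ∀ x, Measurable (ν x)) (hind : iIndepFun ν P) (n : ℕ)
    (x : List ℕ) (i : ℕ) :
    ∫⁻ ω, branchCount ν n x i ω * branchCount ν n x i ω ∂P =
      P (hasChild ν x i) * ∫⁻ ω, (tcount ν n (x ++ [i]) ω : ℝ≥0∞) ^ 2 ∂P := by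
  have hsplit : ∀ ω, branchCount ν n x i ω * branchCount ν n x i ω =
      (hasChild ν x i).indicator 1 ω * (tcount ν n (x ++ [i]) ω : ℝ≥0∞) ^ 2 := fun ω => by
    by_cases h : ω ∈ hasChild ν x i <;> simp [branchCount, h, sq]
  simp_rw [hsplit]
  rw [lintegral_mul_eq_of_disjoint hmν hind (disjoint_singleton_subtree x i)
    (measurable_indicator_hasChild (Set.mem_singleton x) i) ((measurable_tcount n _).pow_const 2),
    lintegral_indicator_one (offspringSigma_le hmν _ _ (measurableSet_hasChild rfl i))]

lemma lintegral_sq_tcount_succ (hmν : ∀ x, Measurable (ν x)) (n : ℕ) (x : List ℕ) :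
    ∫⁻ ω, (tcount ν (n + 1) x ω : ℝ≥0∞) ^ 2 ∂P =
      ∑' i, ∑' j, ∫⁻ ω, branchCount ν n x i ω * branchCount ν n x j ω ∂P := by
  have hmeas : ∀ i j, Measurable fun ω => branchCount ν n x i ω * branchCount ν n x j ω :=
    fun i j => (measurable_branchCount hmν n x i).mul (measurable_branchCount hmν n x j)
  simp_rw [natCast_sq_tcount_succ]
  rw [lintegral_tsum fun i => (Measurable.tsum fun j => hmeas i j).aemeasurable]
  exact tsum_congr fun i => lintegral_tsum fun j => (hmeas i j).aemeasurable

lemma lintegral_natCast_sq_eq_tsum (hmν : ∀ x, Measurable (ν x)) (x : List ℕ) :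
    ∫⁻ ω, (ν x ω : ℝ≥0∞) ^ 2 ∂P = ∑' i, ∑' j,
      ∫⁻ ω, (hasChild ν x i).indicator 1 ω * (hasChild ν x j).indicator 1 ω ∂P := by
  simpa [tcount_one, branchCount, tcount] using lintegral_sq_tcount_succ (P := P) hmν 0 x

variable [IsProbabilityMeasure P]

lemma lintegral_natCast_eq_tsum (hmν : ∀ x, Measurable (ν x)) (hind : iIndepFun ν P)
    (x : List ℕ) : ∫⁻ ω, (ν x ω : ℝ≥0∞) ∂P = ∑' i, P (hasChild ν x i) := by
  simpa [tcount_one, tcount] using lintegral_tcount_succ hmν hind 0 x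

lemma lintegral_tcount (hmν : ∀ x, Measurable (ν x)) (hind : iIndepFun ν P)
    (hidν : ∀ x, IdentDistrib (ν x) (ν root) P P) (n : ℕ) (x : List ℕ) :
    ∫⁻ ω, (tcount ν n x ω : ℝ≥0∞) ∂P = (∫⁻ ω, (ν root ω : ℝ≥0∞) ∂P) ^ n := by
  induction n generalizing x with
  | zero => simp [tcount]
  | succ n ih =>
    rw [lintegral_tcount_succ hmν hind, tsum_congr fun i => by rw [ih], ENNReal.tsum_mul_right,
      ← lintegral_natCast_eq_tsum hmν hind, pow_succ',
      (hidν x).lintegral_comp_eq (φ := fun k => (k : ℝ≥0∞)) measurable_from_top]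

lemma lintegral_branchCount_mul_le (hmν : ∀ x, Measurable (ν x)) (hind : iIndepFun ν P)
    (hidν : ∀ x, IdentDistrib (ν x) (ν root) P P) {M C : ℝ≥0∞}
    (hM : ∫⁻ ω, (ν root ω : ℝ≥0∞) ∂P = M) {n : ℕ} {x : List ℕ}
    (hC : ∀ i, ∫⁻ ω, (tcount ν n (x ++ [i]) ω : ℝ≥0∞) ^ 2 ∂P ≤ C) (i j : ℕ) :
    ∫⁻ ω, branchCount ν n x i ω * branchCount ν n x j ω ∂P ≤
      (∫⁻ ω, (hasChild ν x i).indicator 1 ω * (hasChild ν x j).indicator 1 ω ∂P) * (M ^ n) ^ 2 +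
        if j = i then P (hasChild ν x i) * C else 0 := by
  rcases eq_or_ne j i with rfl | hji
  · rw [lintegral_branchCount_sq hmν hind, if_pos rfl]
    exact le_add_left (by gcongr; exact hC _)
  · rw [lintegral_branchCount_mul_of_ne hmν hind hji.symm, lintegral_tcount hmν hind hidν,
      lintegral_tcount hmν hind hidν, hM, if_neg hji, add_zero, sq]

-- The condition on `K` makes the bound `K M²ⁿ` propagate through
-- `E[Z_{n+1}²] ≤ E[ν²] M²ⁿ + M E[Z_n²]`, where `Z_n = tcount ν n x`.
lemma lintegral_tcount_sq_le (hmν : ∀ x, Measurable (ν x)) (hind : iIndepFun ν P)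
    (hidν : ∀ x, IdentDistrib (ν x) (ν root) P P) {M K : ℝ≥0∞}
    (hM : ∫⁻ ω, (ν root ω : ℝ≥0∞) ∂P = M) (hK1 : 1 ≤ K)
    (hK : ∫⁻ ω, (ν root ω : ℝ≥0∞) ^ 2 ∂P + M * K ≤ M ^ 2 * K) (n : ℕ) (x : List ℕ) :
    ∫⁻ ω, (tcount ν n x ω : ℝ≥0∞) ^ 2 ∂P ≤ K * (M ^ n) ^ 2 := by
  induction n generalizing x with
  | zero => simpa [tcount] using hK1
  | succ n ih =>
    calc ∫⁻ ω, (tcount ν (n + 1) x ω : ℝ≥0∞) ^ 2 ∂P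
        ≤ ∑' i, ∑' j, ((∫⁻ ω, (hasChild ν x i).indicator 1 ω * (hasChild ν x j).indicator 1 ω ∂P) *
            (M ^ n) ^ 2 + if j = i then P (hasChild ν x i) * (K * (M ^ n) ^ 2) else 0) := by
          rw [lintegral_sq_tcount_succ hmν]
          exact ENNReal.tsum_le_tsum fun i => ENNReal.tsum_le_tsum fun j =>
            lintegral_branchCount_mul_le hmν hind hidν hM (fun _ => ih _) i j
      _ = (∫⁻ ω, (ν x ω : ℝ≥0∞) ^ 2 ∂P + (∫⁻ ω, (ν x ω : ℝ≥0∞) ∂P) * K) * (M ^ n) ^ 2 := by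
          simp_rw [ENNReal.tsum_add, ENNReal.tsum_mul_right, tsum_ite_eq,
            ← lintegral_natCast_sq_eq_tsum hmν, ENNReal.tsum_mul_right,
            ← lintegral_natCast_eq_tsum hmν hind]
          ring
      _ = (∫⁻ ω, (ν root ω : ℝ≥0∞) ^ 2 ∂P + M * K) * (M ^ n) ^ 2 := by
          rw [(hidν x).lintegral_comp_eq (φ := fun k => (k : ℝ≥0∞) ^ 2) measurable_from_top,
            (hidν x).lintegral_comp_eq (φ := fun k => (k : ℝ≥0∞)) measurable_from_top, hM]
      _ ≤ M ^ 2 * K * (M ^ n) ^ 2 := by gcongr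
      _ = K * (M ^ (n + 1)) ^ 2 := by ring

end Moments

section PaleyZygmund

variable {Ω : Type*} [MeasurableSpace Ω] {P : Measure Ω}

lemma ENNReal.le_min_add_sq_div (x L : ℝ≥0∞) (hL : L ≠ ∞) : x ≤ min x L + x ^ 2 / L := by
  rcases le_total x L with h | h
  · exact (min_eq_left h).symm ▸ le_self_add
  · refine le_add_left ?_
    rcases eq_or_ne L 0 with rfl | hL0
    · rcases eq_or_ne x 0 with rfl | hx
      · exact zero_le
      · simp [hx, ENNReal.div_zero]
    calc x = x * 1 := (mul_one x).symm
      _ ≤ x * (x / L) := by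
          gcongr
          exact (ENNReal.le_div_iff_mul_le (.inl hL0) (.inl hL)).2 (by simpa)
      _ = x ^ 2 / L := by rw [sq, mul_div_assoc]

lemma inv_two_le_lintegral_min {f : Ω → ℝ≥0∞} {K : ℝ≥0∞} (hf : Measurable f)
    (hf1 : ∫⁻ ω, f ω ∂P = 1) (hf2 : ∫⁻ ω, f ω ^ 2 ∂P ≤ K) (hK0 : K ≠ 0) (hK : K ≠ ∞) :
    2⁻¹ ≤ ∫⁻ ω, min (f ω) (2 * K) ∂P := by
  have htail : ∫⁻ ω, f ω ^ 2 / (2 * K) ∂P ≤ 2⁻¹ := by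
    simp_rw [div_eq_mul_inv]
    rw [lintegral_mul_const _ (hf.pow_const 2)]
    calc (∫⁻ ω, f ω ^ 2 ∂P) * (2 * K)⁻¹ ≤ 1 * K * (2 * K)⁻¹ := by rw [one_mul]; gcongr
      _ = 2⁻¹ := by rw [← div_eq_mul_inv, ENNReal.mul_div_mul_right _ _ hK0 hK, one_div]
  rw [← ENNReal.one_sub_inv_two, tsub_le_iff_right]
  calc 1 = ∫⁻ ω, f ω ∂P := hf1.symm
    _ ≤ ∫⁻ ω, (min (f ω) (2 * K) + f ω ^ 2 / (2 * K)) ∂P :=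
        lintegral_mono fun ω => ENNReal.le_min_add_sq_div _ _
          (ENNReal.mul_ne_top ENNReal.ofNat_ne_top hK)
    _ = ∫⁻ ω, min (f ω) (2 * K) ∂P + ∫⁻ ω, f ω ^ 2 / (2 * K) ∂P :=
        lintegral_add_left (hf.min measurable_const) _
    _ ≤ ∫⁻ ω, min (f ω) (2 * K) ∂P + 2⁻¹ := by gcongr

/-- A Paley–Zygmund bound for limits: the truncations `min (f n) (2 * K)` keep half of the unit
mass, and pass to the limit by dominated convergence. -/
theorem inv_four_mul_le_measure_ne_zero_of_tendsto [IsFiniteMeasure P] {f : ℕ → Ω → ℝ≥0∞}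
    {g : Ω → ℝ≥0∞} {K : ℝ≥0∞} (hf : ∀ n, Measurable (f n)) (hf1 : ∀ n, ∫⁻ ω, f n ω ∂P = 1)
    (hf2 : ∀ n, ∫⁻ ω, f n ω ^ 2 ∂P ≤ K) (hK : K ≠ ∞)
    (hfg : ∀ᵐ ω ∂P, Tendsto (fun n => f n ω) atTop (𝓝 (g ω))) :
    (4 * K)⁻¹ ≤ P {ω | g ω ≠ 0} := by
  have hK0 : K ≠ 0 := by
    rintro rfl
    have hsq := (lintegral_eq_zero_iff ((hf 0).pow_const 2)).1 (nonpos_iff_eq_zero.1 (hf2 0))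
    have := (lintegral_eq_zero_iff (hf 0)).2 (hsq.mono fun ω hω => by simpa using hω)
    simp [hf1] at this
  have hbound : ∫⁻ _, 2 * K ∂P ≠ ∞ := by
    rw [lintegral_const]
    exact ENNReal.mul_ne_top (ENNReal.mul_ne_top ENNReal.ofNat_ne_top hK) (measure_ne_top P _)
  have hlim : Tendsto (fun n => ∫⁻ ω, min (f n ω) (2 * K) ∂P) atTop
      (𝓝 (∫⁻ ω, min (g ω) (2 * K) ∂P)) :=
    tendsto_lintegral_of_dominated_convergence (fun _ => 2 * K)
      (fun n => (hf n).min measurable_const) (fun n => ae_of_all _ fun ω => min_le_right _ _)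
      hbound (hfg.mono fun ω hω => hω.min tendsto_const_nhds)
  have hupper : ∫⁻ ω, min (g ω) (2 * K) ∂P ≤ 2 * K * P {ω | g ω ≠ 0} := by
    refine (lintegral_mono fun ω => ?_).trans (lintegral_indicator_const_le _ _)
    by_cases h : g ω = 0 <;> simp [h]
  rw [ENNReal.inv_le_iff_le_mul (fun _ => by simpa using hK0)
    (fun h => absurd h (ENNReal.mul_ne_top ENNReal.ofNat_ne_top hK))]
  calc (1 : ℝ≥0∞) = 2 * 2⁻¹ := (ENNReal.mul_inv_cancel two_ne_zero ENNReal.ofNat_ne_top).symm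
    _ ≤ 2 * (2 * K * P {ω | g ω ≠ 0}) := by
        gcongr
        exact (ge_of_tendsto' hlim fun n =>
          inv_two_le_lintegral_min (hf n) (hf1 n) (hf2 n) hK0 hK).trans hupper
    _ = 4 * K * P {ω | g ω ≠ 0} := by ring

end PaleyZygmund

section Limit

variable {Ω : Type*} {ν : List ℕ → Ω → ℕ}

-- An everywhere defined version of `W⁽ˣ⁾` that is measurable for the subtree of `x`, so that
-- the events `{W⁽ˣ⁾ = 0}` can be handled by independence.
def gwLimit (ν : List ℕ → Ω → ℕ) (M : ℝ≥0∞) (x : List ℕ) (ω : Ω) : ℝ≥0∞ :=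
  limsup (fun n => (M ^ n)⁻¹ * tcount ν n x ω) atTop

lemma measurable_gwLimit (M : ℝ≥0∞) (x : List ℕ) :
    Measurable[offspringSigma ν (subtree x)] (gwLimit ν M x) :=
  let := offspringSigma ν (subtree x)
  Measurable.limsup fun n => (measurable_tcount n x).const_mul _

lemma gwLimit_append_le {M : ℝ≥0∞} (hM0 : M ≠ 0) (hM : M ≠ ∞) {x : List ℕ} {i : ℕ} {ω : Ω}
    (hi : i < ν x ω) : gwLimit ν M (x ++ [i]) ω ≤ M * gwLimit ν M x ω := by
  rw [gwLimit, gwLimit, ← ENNReal.limsup_const_mul_of_ne_top hM]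
  conv_rhs => rw [← limsup_nat_add _ 1]
  refine limsup_le_limsup (Eventually.of_forall fun n => ?_)
  have hsub : tcount ν n (x ++ [i]) ω ≤ tcount ν (n + 1) x ω :=
    Finset.single_le_sum (f := fun j => tcount ν n (x ++ [j]) ω) (fun _ _ => Nat.zero_le _)
      (Finset.mem_range.2 hi)
  calc (M ^ n)⁻¹ * tcount ν n (x ++ [i]) ω
      = M * (M ^ (n + 1))⁻¹ * tcount ν n (x ++ [i]) ω := by
        rw [pow_succ, ENNReal.mul_inv (.inr hM) (.inr hM0), mul_comm M, mul_assoc (M ^ n)⁻¹,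
          ENNReal.inv_mul_cancel hM0 hM, mul_one]
    _ ≤ M * ((M ^ (n + 1))⁻¹ * tcount ν (n + 1) x ω) := by rw [mul_assoc]; gcongr

variable [MeasurableSpace Ω] {P : Measure Ω}

lemma ae_tendsto_gwLimit {m : ℝ} (hm : 0 < m) {x : List ℕ} {w : Ω → ℝ}
    (hw : ∀ᵐ ω ∂P, Tendsto (fun n => (m ^ n)⁻¹ * (tcount ν n x ω : ℝ)) atTop (𝓝 (w ω))) :
    ∀ᵐ ω ∂P, Tendsto (fun n => (ENNReal.ofReal m ^ n)⁻¹ * tcount ν n x ω) atTop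
      (𝓝 (gwLimit ν (ENNReal.ofReal m) x ω)) ∧
        gwLimit ν (ENNReal.ofReal m) x ω = ENNReal.ofReal (w ω) := by
  filter_upwards [hw] with ω hω
  have hofReal : ∀ n, (ENNReal.ofReal m ^ n)⁻¹ * tcount ν n x ω =
      ENNReal.ofReal ((m ^ n)⁻¹ * tcount ν n x ω) := fun n => by
    rw [← ENNReal.ofReal_pow hm.le, ← ENNReal.ofReal_inv_of_pos (pow_pos hm n),
      ENNReal.ofReal_mul (by positivity), ENNReal.ofReal_natCast]
  have hlim := (ENNReal.continuous_ofReal.tendsto _).comp hω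
  simp only [Function.comp_def, ← hofReal] at hlim
  have hW : gwLimit ν (ENNReal.ofReal m) x ω = ENNReal.ofReal (w ω) := hlim.limsup_eq
  exact ⟨hW ▸ hlim, hW⟩

lemma ae_sum_children_eq {m : ℝ} (hm : m ≠ 0) {W : List ℕ → Ω → ℝ}
    (hW : ∀ x, ∀ᵐ ω ∂P, Tendsto (fun n => (m ^ n)⁻¹ * (tcount ν n x ω : ℝ)) atTop (𝓝 (W x ω))) :
    ∀ᵐ ω ∂P, ∀ y, ∑ i ∈ Finset.range (ν y ω), W (y ++ [i]) ω = m * W y ω := by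
  refine ae_all_iff.2 fun y => ?_
  filter_upwards [hW y, ae_all_iff.2 fun i => hW (y ++ [i])] with ω hy hchildren
  have hscaled : ∀ n, m * ((m ^ (n + 1))⁻¹ * (tcount ν (n + 1) y ω : ℝ)) =
      ∑ i ∈ Finset.range (ν y ω), (m ^ n)⁻¹ * (tcount ν n (y ++ [i]) ω : ℝ) := fun n => by
    simp only [tcount, Nat.cast_sum, Finset.mul_sum, pow_succ]
    exact Finset.sum_congr rfl fun _ _ => by field_simp
  refine tendsto_nhds_unique ?_ ((hy.comp (tendsto_add_atTop_nat 1)).const_mul m)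
  simp only [Function.comp_def, hscaled]
  exact tendsto_finsetSum _ fun i _ => hchildren i

end Limit

lemma ENNReal.exists_add_mul_le_sq_mul {V M : ℝ≥0∞} (hV : V ≠ ∞) (hM1 : 1 < M) (hM : M ≠ ∞) :
    ∃ K, 1 ≤ K ∧ K ≠ ∞ ∧ V + M * K ≤ M ^ 2 * K := by
  set d := M - 1
  have hd0 : d ≠ 0 := (tsub_pos_of_lt hM1).ne'
  have hdtop : d ≠ ∞ := ENNReal.sub_ne_top hM
  refine ⟨1 + V / d, le_self_add, ENNReal.add_ne_top.2 ⟨ENNReal.one_ne_top,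
    ENNReal.div_ne_top hV hd0⟩, ?_⟩
  have hdK : d * (1 + V / d) = d + V := by rw [mul_add, mul_one, ENNReal.mul_div_cancel hd0 hdtop]
  have hMd : M = 1 + d := (add_tsub_cancel_of_le hM1.le).symm
  calc V + M * (1 + V / d) ≤ M * (1 + V / d) + M * (d * (1 + V / d)) := by
        rw [add_comm]
        gcongr
        rw [hdK]
        exact le_add_self.trans (le_mul_of_one_le_left zero_le hM1.le)
    _ = M * ((1 + d) * (1 + V / d)) := by ring
    _ = M ^ 2 * (1 + V / d) := by rw [← hMd]; ring

lemma measure_eq_one_add_measure_two_le_mul_lt_one {Ω : Type*} [MeasurableSpace Ω]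
    {P : Measure Ω} [IsProbabilityMeasure P] {N : Ω → ℕ} (hN : Measurable N)
    (hN1 : 1 < ∫⁻ ω, (N ω : ℝ≥0∞) ∂P) {c : ℝ≥0∞} (hc : c < 1) :
    P {ω | N ω = 1} + P {ω | 2 ≤ N ω} * c < 1 := by
  have hN2 : P {ω | 2 ≤ N ω} ≠ 0 := fun h => by
    have hle : ∀ᵐ ω ∂P, (N ω : ℝ≥0∞) ≤ 1 := by
      filter_upwards [measure_eq_zero_iff_ae_notMem.1 h] with ω hω
      have : N ω ≤ 1 := by simp only [not_le] at hω; omega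
      exact_mod_cast this
    exact absurd ((lintegral_mono_ae hle).trans_eq (by simp)) (not_le.2 hN1)
  have hdisj : Disjoint {ω | N ω = 1} {ω | 2 ≤ N ω} :=
    Set.disjoint_left.2 fun ω (h1 : N ω = 1) (h2 : 2 ≤ N ω) => by omega
  calc P {ω | N ω = 1} + P {ω | 2 ≤ N ω} * c < P {ω | N ω = 1} + P {ω | 2 ≤ N ω} * 1 :=
        ENNReal.add_lt_add_left (measure_ne_top _ _)
          (ENNReal.mul_lt_mul_right hN2 (measure_ne_top _ _) hc)
    _ ≤ 1 := by
        rw [mul_one, ← measure_union hdisj (hN measurableSet_Ici)]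
        exact prob_le_one

lemma eq_zero_of_forall_le_mul_comp {ι : Type*} {q : ι → ℝ≥0∞} {C r : ℝ≥0∞} (f : ι → ι)
    (hC : C ≠ ∞) (hqC : ∀ x, q x ≤ C) (hr : r < 1) (hq : ∀ x, q x ≤ r * q (f x)) (x : ι) :
    q x = 0 := by
  set s := ⨆ x, q x
  have hs : s ≤ r * s := iSup_le fun x => (hq x).trans (by gcongr; exact le_iSup q (f x))
  have hs0 : s = 0 := by
    by_contra hs0
    have hstop : s ≠ ∞ := ((iSup_le hqC).trans_lt hC.lt_top).ne
    have hlt := ENNReal.mul_lt_mul_left hs0 hstop hr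
    rw [one_mul] at hlt
    exact absurd hs (not_le.2 hlt)
  exact nonpos_iff_eq_zero.1 (hs0 ▸ le_iSup q x)

section Survival

variable {Ω : Type*} [MeasurableSpace Ω] {P : Measure Ω} {ν : List ℕ → Ω → ℕ}

lemma measure_gwLimit_eq_zero_le (hmν : ∀ x, Measurable (ν x)) (hind : iIndepFun ν P)
    {M : ℝ≥0∞} (hM0 : M ≠ 0) (hM : M ≠ ∞) {x : List ℕ} (hνx : ∀ᵐ ω ∂P, 0 < ν x ω) :
    P {ω | gwLimit ν M x ω = 0} ≤
      P {ω | ν x ω = 1} * P {ω | gwLimit ν M (x ++ [0]) ω = 0} +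
        P {ω | 2 ≤ ν x ω} *
          (P {ω | gwLimit ν M (x ++ [0]) ω = 0} * P {ω | gwLimit ν M (x ++ [1]) ω = 0}) := by
  set B : ℕ → Set Ω := fun i => {ω | gwLimit ν M (x ++ [i]) ω = 0}
  have hB : ∀ i, MeasurableSet[offspringSigma ν (subtree (x ++ [i]))] (B i) := fun i =>
    measurable_gwLimit M _ (measurableSet_singleton 0)
  have hchild : ∀ ω i, i < ν x ω → gwLimit ν M x ω = 0 → ω ∈ B i := fun ω i hi h0 =>
    nonpos_iff_eq_zero.1 ((gwLimit_append_le hM0 hM hi).trans_eq (by rw [h0, mul_zero]))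
  have hsub : {ω | gwLimit ν M x ω = 0} ≤ᵐ[P]
      (({ω | ν x ω = 1} ∩ B 0) ∪ ({ω | 2 ≤ ν x ω} ∩ (B 0 ∩ B 1)) : Set Ω) := by
    filter_upwards [hνx] with ω hpos h0
    rcases Nat.lt_or_ge (ν x ω) 2 with h2 | h2
    · exact .inl ⟨by change ν x ω = 1; omega, hchild ω 0 hpos h0⟩
    · exact .inr ⟨h2, hchild ω 0 hpos h0, hchild ω 1 h2 h0⟩
  have hx := Set.mem_singleton x
  calc P {ω | gwLimit ν M x ω = 0}
      ≤ P ({ω | ν x ω = 1} ∩ B 0) + P ({ω | 2 ≤ ν x ω} ∩ (B 0 ∩ B 1)) :=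
        (measure_mono_ae hsub).trans (measure_union_le _ _)
    _ = _ := by
        rw [measure_inter_eq_mul_of_disjoint (A := {ω | ν x ω = 1}) hmν hind
            (disjoint_singleton_subtree x 0)
            (measurable_offspringSigma hx (measurableSet_singleton 1)) (hB 0),
          measure_inter_eq_mul_of_disjoint (A := {ω | 2 ≤ ν x ω}) hmν hind
            ((disjoint_singleton_subtree x 0).union_right (disjoint_singleton_subtree x 1))
            (measurable_offspringSigma hx measurableSet_Ici)
            ((offspringSigma_mono Set.subset_union_left _ (hB 0)).inter
              (offspringSigma_mono Set.subset_union_right _ (hB 1))),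
          measure_inter_eq_mul_of_disjoint hmν hind (disjoint_subtree_append zero_ne_one)
            (hB 0) (hB 1)]

variable [IsProbabilityMeasure P]

lemma measure_gwLimit_eq_zero_le_one_sub (hmν : ∀ x, Measurable (ν x)) (hind : iIndepFun ν P)
    (hidν : ∀ x, IdentDistrib (ν x) (ν root) P P) {M : ℝ≥0∞}
    (hM : ∫⁻ ω, (ν root ω : ℝ≥0∞) ∂P = M) (hM0 : M ≠ 0) (hMtop : M ≠ ∞) {K : ℝ≥0∞}
    (hK1 : 1 ≤ K) (hKtop : K ≠ ∞) (hK : ∫⁻ ω, (ν root ω : ℝ≥0∞) ^ 2 ∂P + M * K ≤ M ^ 2 * K)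
    {y : List ℕ} (hconv : ∀ᵐ ω ∂P,
      Tendsto (fun n => (M ^ n)⁻¹ * tcount ν n y ω) atTop (𝓝 (gwLimit ν M y ω))) :
    P {ω | gwLimit ν M y ω = 0} ≤ 1 - (4 * K)⁻¹ := by
  have hZ : ∀ n, Measurable fun ω => (tcount ν n y ω : ℝ≥0∞) := fun n =>
    (measurable_tcount n y).mono (offspringSigma_le hmν _) le_rfl
  have hMn : ∀ n, (M ^ n)⁻¹ * M ^ n = 1 := fun n =>
    ENNReal.inv_mul_cancel (pow_ne_zero n hM0) (ENNReal.pow_ne_top hMtop)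
  have hPZ := inv_four_mul_le_measure_ne_zero_of_tendsto (P := P)
    (f := fun n ω => (M ^ n)⁻¹ * tcount ν n y ω) (K := K) (fun n => (hZ n).const_mul _)
    (fun n => by rw [lintegral_const_mul _ (hZ n), lintegral_tcount hmν hind hidν, hM, hMn])
    (fun n => by
      simp_rw [mul_pow]
      rw [lintegral_const_mul _ ((hZ n).pow_const 2)]
      calc ((M ^ n)⁻¹) ^ 2 * ∫⁻ ω, (tcount ν n y ω : ℝ≥0∞) ^ 2 ∂P
          ≤ ((M ^ n)⁻¹) ^ 2 * (K * (M ^ n) ^ 2) := by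
            gcongr; exact lintegral_tcount_sq_le hmν hind hidν hM hK1 hK n y
        _ = K := by rw [mul_left_comm, ← mul_pow, hMn, one_pow, mul_one])
    hKtop hconv
  have hmeas : MeasurableSet {ω | gwLimit ν M y ω ≠ 0} :=
    (offspringSigma_le hmν _ _ (measurable_gwLimit M y (measurableSet_singleton 0))).compl
  rw [show {ω | gwLimit ν M y ω = 0} = {ω | gwLimit ν M y ω ≠ 0}ᶜ by ext; simp,
    prob_compl_eq_one_sub hmeas]
  exact tsub_le_tsub_left hPZ 1

theorem measure_gwLimit_root_eq_zero (hmν : ∀ x, Measurable (ν x)) (hind : iIndepFun ν P)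
    (hidν : ∀ x, IdentDistrib (ν x) (ν root) P P) (hνpos : ∀ x, ∀ᵐ ω ∂P, 0 < ν x ω)
    {M : ℝ≥0∞} (hM : ∫⁻ ω, (ν root ω : ℝ≥0∞) ∂P = M) (hM1 : 1 < M)
    (hV : ∫⁻ ω, (ν root ω : ℝ≥0∞) ^ 2 ∂P ≠ ∞) (hconv : ∀ x, ∀ᵐ ω ∂P,
      Tendsto (fun n => (M ^ n)⁻¹ * tcount ν n x ω) atTop (𝓝 (gwLimit ν M x ω))) :
    P {ω | gwLimit ν M root ω = 0} = 0 := by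
  have hM0 : M ≠ 0 := (zero_lt_one.trans hM1).ne'
  have hMtop : M ≠ ∞ := hM ▸ ne_top_of_le_ne_top hV (lintegral_mono fun ω =>
    (Nat.cast_le.2 (Nat.le_self_pow two_ne_zero (ν root ω))).trans_eq (Nat.cast_pow _ _))
  obtain ⟨K, hK1, hKtop, hK⟩ := ENNReal.exists_add_mul_le_sq_mul hV hM1 hMtop
  set c := 1 - (4 * K)⁻¹
  have hc : ∀ y, P {ω | gwLimit ν M y ω = 0} ≤ c := fun y =>
    measure_gwLimit_eq_zero_le_one_sub hmν hind hidν hM hM0 hMtop hK1 hKtop hK (hconv y)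
  have hc1 : c < 1 := ENNReal.sub_lt_self ENNReal.one_ne_top one_ne_zero
    (ENNReal.inv_ne_zero.2 (ENNReal.mul_ne_top ENNReal.ofNat_ne_top hKtop))
  have hr := measure_eq_one_add_measure_two_le_mul_lt_one (hmν root) (hM ▸ hM1) hc1
  refine eq_zero_of_forall_le_mul_comp (q := fun x => P {ω | gwLimit ν M x ω = 0})
    (fun x => x ++ [0]) ENNReal.one_ne_top (fun _ => prob_le_one) hr (fun x => ?_) root
  have h₁ : P {ω | ν x ω = 1} = P {ω | ν root ω = 1} :=
    (hidν x).measure_mem_eq (measurableSet_singleton 1)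
  have h₂ : P {ω | 2 ≤ ν x ω} = P {ω | 2 ≤ ν root ω} := (hidν x).measure_mem_eq measurableSet_Ici
  calc P {ω | gwLimit ν M x ω = 0}
      ≤ P {ω | ν x ω = 1} * P {ω | gwLimit ν M (x ++ [0]) ω = 0} +
          P {ω | 2 ≤ ν x ω} *
            (P {ω | gwLimit ν M (x ++ [0]) ω = 0} * P {ω | gwLimit ν M (x ++ [1]) ω = 0}) :=
        measure_gwLimit_eq_zero_le hmν hind hM0 hMtop (hνpos x)
    _ ≤ P {ω | ν root ω = 1} * P {ω | gwLimit ν M (x ++ [0]) ω = 0} +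
          P {ω | 2 ≤ ν root ω} * (P {ω | gwLimit ν M (x ++ [0]) ω = 0} * c) := by
        rw [h₁, h₂]
        gcongr
        exact hc _
    _ = (P {ω | ν root ω = 1} + P {ω | 2 ≤ ν root ω} * c) *
          P {ω | gwLimit ν M (x ++ [0]) ω = 0} := by ring

theorem ae_limit_root_pos (hmν : ∀ x, Measurable (ν x)) (hind : iIndepFun ν P)
    (hidν : ∀ x, IdentDistrib (ν x) (ν root) P P) (hνpos : ∀ x, ∀ᵐ ω ∂P, 0 < ν x ω) {m : ℝ}
    (hm : m = ∫ ω, (ν root ω : ℝ) ∂P) (hm1 : 1 < m)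
    (hν2 : Integrable (fun ω => (ν root ω : ℝ) ^ 2) P) {W : List ℕ → Ω → ℝ}
    (hW : ∀ x, ∀ᵐ ω ∂P, Tendsto (fun n => (m ^ n)⁻¹ * (tcount ν n x ω : ℝ)) atTop (𝓝 (W x ω))) :
    ∀ᵐ ω ∂P, 0 < W root ω := by
  have hm0 : 0 < m := one_pos.trans hm1
  have hνint : Integrable (fun ω => (ν root ω : ℝ)) P := by
    -- otherwise `∫ ν = 0` by convention, contradicting `1 < m`
    by_contra h
    rw [integral_undef h] at hm
    linarith
  have hM : ∫⁻ ω, (ν root ω : ℝ≥0∞) ∂P = ENNReal.ofReal m := by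
    rw [hm, ofReal_integral_eq_lintegral_ofReal hνint (ae_of_all _ fun _ => Nat.cast_nonneg _)]
    simp
  have hsurv := measure_gwLimit_root_eq_zero hmν hind hidν hνpos hM
    (by rwa [← ENNReal.ofReal_one, ENNReal.ofReal_lt_ofReal_iff hm0])
    (by simpa using hν2.lintegral_lt_top.ne)
    (fun x => (ae_tendsto_gwLimit hm0 (hW x)).mono fun _ h => h.1)
  filter_upwards [measure_eq_zero_iff_ae_notMem.1 hsurv, ae_tendsto_gwLimit hm0 (hW root)]
    with ω h0 h
  exact ENNReal.ofReal_pos.1 (pos_iff_ne_zero.2 (h.2 ▸ h0))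

end Survival

theorem uniform_flow_resistance_upper_bound_general
    {Ω : Type*} [MeasurableSpace Ω] (P : Measure Ω) [IsProbabilityMeasure P]
    -- the offspring variables `ν_x` and the edge weights `ξ_x`
    (ν : List ℕ → Ω → ℕ) (ξ : List ℕ → Ω → ℝ)
    (hmν : ∀ x, Measurable (ν x))
    -- the two families are i.i.d. and globally independent
    (hindep : iIndepFun (pairFam ν ξ) P)
    (hidν : ∀ x, IdentDistrib (ν x) (ν root) P P)
    -- `ν` takes values in the positive integers and `ξ` is strictly positive
    (hνpos : ∀ x, ∀ᵐ ω ∂P, 0 < ν x ω)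
    (hξpos : ∀ x, ∀ᵐ ω ∂P, 0 < ξ x ω)
    -- the mean offspring number `m = E[ν]` satisfies `1 < m`
    (m : ℝ) (hm : m = ∫ ω, (ν root ω : ℝ) ∂P) (hm1 : 1 < m)
    (hν2 : Integrable (fun ω => (ν root ω : ℝ) ^ 2) P)
    -- `Wx x` is the a.s. limit `W⁽ˣ⁾` of `m^(|x|-n) #T_n[x]`; in particular `W = Wx root`
    (Wx : List ℕ → Ω → ℝ)
    (hWx : ∀ x, ∀ᵐ ω ∂P,
      Tendsto (fun n => (m ^ n)⁻¹ * (tcount ν n x ω : ℝ)) atTop (𝓝 (Wx x ω)))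
    :
    ∀ᵐ ω ∂P, ∀ n : ℕ, 1 ≤ n →
      (gwCond m ν ξ n root ω)⁻¹ ≤
        ∑ k ∈ Finset.Icc 1 n, ∑ x ∈ verts ν k ω,
          (m ^ k)⁻¹ * ξ x ω * (Wx x ω / Wx root ω) ^ 2 := by
  have hm0 : 0 < m := one_pos.trans hm1
  filter_upwards [ae_sum_children_eq hm0.ne' hWx, ae_all_iff.2 hνpos, ae_all_iff.2 hξpos,
    ae_limit_root_pos hmν (iIndepFun_of_pairFam hindep) hidν hνpos hm hm1 hν2 hWx]
    with ω hrec hν hξ hW n _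
  have hbound := sq_mul_inv_gwCond_le_flowEnergy hm0 hν hξ
    (W := fun x => Wx x ω / Wx root ω) (fun y => by rw [← Finset.sum_div, hrec, mul_div_assoc])
    n root
  rwa [div_self hW.ne', one_pow, one_mul, flowEnergy_root_eq] at hbound

/-- Uniform-flow (Thomson) upper bound: a.s., for every `n ≥ 1`, `R_n ≤ Σ_{k=1}^n Σ_{x ∈ T_k} m^(-k) ξ_x (W⁽ˣ⁾/W)²`. -/
theorem uniform_flow_resistance_upper_bound
    {Ω : Type*} [MeasurableSpace Ω] (P : Measure Ω) [IsProbabilityMeasure P]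
    -- the offspring variables `ν_x` and the edge weights `ξ_x`
    (ν : List ℕ → Ω → ℕ) (ξ : List ℕ → Ω → ℝ)
    (hmν : ∀ x, Measurable (ν x)) (hmξ : ∀ x, Measurable (ξ x))
    -- the two families are i.i.d. and globally independent
    (hindep : iIndepFun (pairFam ν ξ) P)
    (hidν : ∀ x, IdentDistrib (ν x) (ν root) P P)
    (hidξ : ∀ x, IdentDistrib (ξ x) (ξ root) P P)
    -- `ν` takes values in the positive integers and `ξ` is strictly positive
    (hνpos : ∀ x, ∀ᵐ ω ∂P, 0 < ν x ω)
    (hξpos : ∀ x, ∀ᵐ ω ∂P, 0 < ξ x ω)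
    -- the mean offspring number `m = E[ν]` satisfies `1 < m`
    (hνint : Integrable (fun ω => (ν root ω : ℝ)) P)
    (m : ℝ) (hm : m = ∫ ω, (ν root ω : ℝ) ∂P) (hm1 : 1 < m)
    (hν2 : Integrable (fun ω => (ν root ω : ℝ) ^ 2) P)
    -- `Wx x` is the a.s. limit `W⁽ˣ⁾` of `m^(|x|-n) #T_n[x]`; in particular `W = Wx root`
    (Wx : List ℕ → Ω → ℝ)
    (hWx : ∀ x, ∀ᵐ ω ∂P,
      Tendsto (fun n => (m ^ n)⁻¹ * (tcount ν n x ω : ℝ)) atTop (𝓝 (Wx x ω)))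
    :
    ∀ᵐ ω ∂P, ∀ n : ℕ, 1 ≤ n →
      (gwCond m ν ξ n root ω)⁻¹ ≤
        ∑ k ∈ Finset.Icc 1 n, ∑ x ∈ verts ν k ω,
          (m ^ k)⁻¹ * ξ x ω * (Wx x ω / Wx root ω) ^ 2 :=
  uniform_flow_resistance_upper_bound_general P ν ξ hmν hindep hidν hνpos hξpos m hm hm1 hν2 Wx hWx
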